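/- arXiv:2206.12350 — 2 statements merged into one kernel-verified Lean document; each statement's English description precedes it below -/
import Mathlib

section
/- Let n ≥ 1 and suppose M_k is invertible for every k ∈ ℤ. Set c_k^T := e_n^T M_k^{-1} and y_k := c_k^T x_k. Then for every solution (x, u) of the system and every k ∈ ℤ and i = 0, …, n−1, the i-th forward shift of the output is independent of the inputs: y_{k+i} = c_{k+i}^T A_{k+i-1} ⋯ A_k x_k. Equivalently, Θ_k x_k = (y_k, y_{k+1}, …, y_{k+n-1})^T, where Θ_k is the matrix whose i-th row is c_{k+i}^T A_{k+i-1} ⋯ A_k. -/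
open Matrix BigOperators

noncomputable section

/-- `Pmat n A k j = A (k-1) * A (k-2) * ⋯ * A (k-j)` (product of `j` factors, `Pmat n A k 0 = 1`). -/
def Pmat (n : ℕ) (A : ℤ → Matrix (Fin n) (Fin n) ℝ) (k : ℤ) : ℕ → Matrix (Fin n) (Fin n) ℝ
  | 0 => 1
  | j + 1 => Pmat n A k j * A (k - ((j : ℤ) + 1))

/-- The matrix `M_k` whose `j`-th column is `P_k^{(j)} b_{k-1-j}`. -/
def Mmat (n : ℕ) (A : ℤ → Matrix (Fin n) (Fin n) ℝ) (b : ℤ → Fin n → ℝ) (k : ℤ) :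
    Matrix (Fin n) (Fin n) ℝ :=
  Matrix.of fun i j => (Pmat n A k (j : ℕ) *ᵥ b (k - 1 - ((j : ℕ) : ℤ))) i

/-- The last standard basis vector `e_n` of `ℝ^n`. -/
def elast (n : ℕ) : Fin n → ℝ := fun i => if (i : ℕ) = n - 1 then 1 else 0

/-- The row vector `c_k^T := e_n^T M_k^{-1}`. -/
def cvec (n : ℕ) (A : ℤ → Matrix (Fin n) (Fin n) ℝ) (b : ℤ → Fin n → ℝ) (k : ℤ) :
    Fin n → ℝ :=
  elast n ᵥ* (Mmat n A b k)⁻¹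

/-- The matrix `Θ_k` whose `i`-th row is `c_{k+i}^T A_{k+i-1} ⋯ A_k`. -/
def Theta (n : ℕ) (A : ℤ → Matrix (Fin n) (Fin n) ℝ) (b : ℤ → Fin n → ℝ) (k : ℤ) :
    Matrix (Fin n) (Fin n) ℝ :=
  Matrix.of fun i j => (cvec n A b (k + (i : ℕ)) ᵥ* Pmat n A (k + (i : ℕ)) (i : ℕ)) j

/-- The transformed dynamics matrix `Ā_k := Θ_{k+1} A_k Θ_k^{-1}`. -/
def Abar (n : ℕ) (A : ℤ → Matrix (Fin n) (Fin n) ℝ) (b : ℤ → Fin n → ℝ) (k : ℤ) :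
    Matrix (Fin n) (Fin n) ℝ :=
  Theta n A b (k + 1) * A k * (Theta n A b k)⁻¹

lemma Pmat_succ_left (n : ℕ) (A : ℤ → Matrix (Fin n) (Fin n) ℝ) (m : ℤ) :
    ∀ j : ℕ, Pmat n A (m + 1) (j + 1) = A m * Pmat n A m j := by
  intro j
  induction j with
  | zero => simp [Pmat]
  | succ j ih =>
      show Pmat n A (m+1) (j+1) * A (m + 1 - ((j:ℤ) + 1 + 1)) = A m * Pmat n A m (j+1)
      rw [ih]
      show A m * Pmat n A m j * A (m + 1 - ((j:ℤ) + 1 + 1)) = A m * (Pmat n A m j * A (m - ((j:ℤ)+1)))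
      rw [Matrix.mul_assoc]
      congr 2
      ring_nf

lemma cvec_vecMul (n : ℕ) (A : ℤ → Matrix (Fin n) (Fin n) ℝ) (b : ℤ → Fin n → ℝ)
    (hM : ∀ k : ℤ, IsUnit (Mmat n A b k)) (m : ℤ) :
    cvec n A b m ᵥ* Mmat n A b m = elast n := by
  unfold cvec
  rw [Matrix.vecMul_vecMul,
    Matrix.nonsing_inv_mul _ ((Matrix.isUnit_iff_isUnit_det _).mp (hM m)), Matrix.vecMul_one]

lemma cvec_dot_col (n : ℕ) (A : ℤ → Matrix (Fin n) (Fin n) ℝ) (b : ℤ → Fin n → ℝ)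
    (hM : ∀ k : ℤ, IsUnit (Mmat n A b k)) (m : ℤ) (j : ℕ) (hj : j < n) (hne : j ≠ n - 1) :
    cvec n A b m ⬝ᵥ (Pmat n A m j *ᵥ b (m - 1 - (j : ℤ))) = 0 := by
  have h1 : (Pmat n A m j *ᵥ b (m - 1 - (j : ℤ))) = fun i => Mmat n A b m i ⟨j, hj⟩ := rfl
  have h2 : cvec n A b m ⬝ᵥ (fun i => Mmat n A b m i ⟨j, hj⟩)
      = (cvec n A b m ᵥ* Mmat n A b m) ⟨j, hj⟩ := rfl
  rw [h1, h2, cvec_vecMul n A b hM m]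
  simp [elast, hne]

lemma sol_expand (n : ℕ) (A : ℤ → Matrix (Fin n) (Fin n) ℝ) (b : ℤ → Fin n → ℝ)
    (x : ℤ → Fin n → ℝ) (u : ℤ → ℝ)
    (hsol : ∀ k : ℤ, x (k + 1) = A k *ᵥ x k + u k • b k) (k : ℤ) :
    ∀ i : ℕ, x (k + (i : ℤ)) = Pmat n A (k + (i : ℤ)) i *ᵥ x k
      + ∑ j ∈ Finset.range i,
          u (k + (i : ℤ) - 1 - (j : ℤ)) • (Pmat n A (k + (i : ℤ)) j *ᵥ b (k + (i : ℤ) - 1 - (j : ℤ))) := by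
  have hsum : ∀ (M : Matrix (Fin n) (Fin n) ℝ) (s : Finset ℕ) (f : ℕ → Fin n → ℝ),
      M *ᵥ (∑ j ∈ s, f j) = ∑ j ∈ s, M *ᵥ f j := by
    intro M s f
    ext r
    simp only [Matrix.mulVec, dotProduct, Finset.sum_apply, Finset.mul_sum]
    rw [Finset.sum_comm]
  intro i
  induction i with
  | zero => simp [Pmat]
  | succ i ih =>
      have hk : (k + ((i + 1 : ℕ) : ℤ)) = (k + (i : ℤ)) + 1 := by push_cast; ring
      rw [hk, hsol (k + (i : ℤ)), ih, Finset.sum_range_succ', Matrix.mulVec_add, hsum]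
      simp only [Matrix.mulVec_smul, Matrix.mulVec_mulVec, Pmat_succ_left]
      rw [add_assoc]
      congr 1
      congr 1
      · apply Finset.sum_congr rfl
        intro j hj
        have e1 : (k + (i:ℤ) + 1 - 1 - ((j + 1 : ℕ) : ℤ)) = k + (i:ℤ) - 1 - (j:ℤ) := by
          push_cast; ring
        rw [e1]
      · simp [Pmat]

/-- for every solution `(x, u)` of `x_{k+1} = A_k x_k + b_k u_k` the forward
shifts `y_{k+i}` (with `y_k := c_k^T x_k`, `i = 0, …, n-1`) are independent of the inputs:
`y_{k+i} = c_{k+i}^T A_{k+i-1} ⋯ A_k x_k`; equivalently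
`Θ_k x_k = (y_k, …, y_{k+n-1})^T`. -/
theorem stmt4 (n : ℕ) (hn : 1 ≤ n)
    (A : ℤ → Matrix (Fin n) (Fin n) ℝ) (b : ℤ → Fin n → ℝ)
    (hM : ∀ k : ℤ, IsUnit (Mmat n A b k))
    (x : ℤ → Fin n → ℝ) (u : ℤ → ℝ)
    (hsol : ∀ k : ℤ, x (k + 1) = A k *ᵥ x k + u k • b k) (k : ℤ) :
    (∀ i : ℕ, i < n →
        cvec n A b (k + i) ⬝ᵥ x (k + i) =
          (cvec n A b (k + i) ᵥ* Pmat n A (k + i) i) ⬝ᵥ x k) ∧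
    Theta n A b k *ᵥ x k =
      fun i : Fin n => cvec n A b (k + (i : ℕ)) ⬝ᵥ x (k + (i : ℕ)) := by
  have key : ∀ i : ℕ, i < n →
      cvec n A b (k + i) ⬝ᵥ x (k + i) =
        (cvec n A b (k + i) ᵥ* Pmat n A (k + i) i) ⬝ᵥ x k := by
    intro i hi
    have hds : ∀ (v : Fin n → ℝ) (s : Finset ℕ) (f : ℕ → Fin n → ℝ),
        v ⬝ᵥ (∑ j ∈ s, f j) = ∑ j ∈ s, v ⬝ᵥ f j := by
      intro v s f
      simp only [dotProduct, Finset.sum_apply, Finset.mul_sum]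
      rw [Finset.sum_comm]
    rw [sol_expand n A b x u hsol k i, dotProduct_add, hds]
    have hz : ∀ j ∈ Finset.range i,
        cvec n A b (k + (i:ℤ)) ⬝ᵥ
          (u (k + (i:ℤ) - 1 - (j:ℤ)) • (Pmat n A (k + (i:ℤ)) j *ᵥ b (k + (i:ℤ) - 1 - (j:ℤ)))) = 0 := by
      intro j hj
      have hji : j < i := Finset.mem_range.mp hj
      rw [dotProduct_smul,
        cvec_dot_col n A b hM (k + (i:ℤ)) j (lt_trans hji hi) (by omega), smul_zero]
    rw [Finset.sum_eq_zero hz, add_zero, Matrix.dotProduct_mulVec]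
  refine ⟨key, ?_⟩
  funext i
  exact (key i i.isLt).symm
end
end

section
/- (Flatness of linear time-variant discrete-time single-input systems under the rank condition.) Let n ≥ 1 and suppose M_k is invertible for every k ∈ ℤ. Set c_k^T := e_n^T M_k^{-1}. Then the map which sends a solution (x, u) of the system to its output sequence (c_k^T x_k)_{k ∈ ℤ} is a bijection from the set of all solutions onto the set of all real sequences ℤ → ℝ; i.e., y_k = c_k^T x_k is a flat output establishing a one-to-one correspondence between system trajectories and arbitrary sequences. -/
open Matrix BigOperators

noncomputable section

/-! Along a solution, `y_{k+i} = c_{k+i}ᵀ P_{k+i}^{(i)} x_k` for `i < n`: the input terms drop out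
because `c_kᵀ P_k^{(j)} b_{k-1-j} = δ_{j,n-1}` (this is `c_kᵀ M_k = e_nᵀ`), while for `i = n` the input
`u_k` appears with coefficient one. The rows `c_{k+i}ᵀ P_{k+i}^{(i)}` form `Θ_k`, and `Θ_k M_k` is
antitriangular with ones on the antidiagonal, so `Θ_k` is invertible. Hence
`x_k = Θ_k⁻¹ (y_k, …, y_{k+n-1})` and `u_k` is read off from `y_{k+n}`; conversely these formulas
turn any sequence `y` into a solution with output `y`. -/

theorem Matrix.isUnit_of_antitriangular {R : Type*} [CommRing R] {n : ℕ}
    (N : Matrix (Fin n) (Fin n) R)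
    (hN : ∀ i j : Fin n, (i : ℕ) + j < n → N i j = if (i : ℕ) + j = n - 1 then 1 else 0) :
    IsUnit N := by
  have hlower : (N.submatrix id Fin.revPerm).IsLowerTriangular := by
    intro i j (hij : i < j)
    have := hN i (Fin.rev j) (by rw [Fin.val_rev]; omega)
    simpa [if_neg (show (i : ℕ) + (n - (j + 1)) ≠ n - 1 by omega)] using this
  have hdet : (N.submatrix id Fin.revPerm).det = 1 := by
    rw [det_of_isLowerTriangular _ hlower]
    refine Finset.prod_eq_one fun i _ => ?_
    have := hN i (Fin.rev i) (by rw [Fin.val_rev]; omega)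
    simpa [if_pos (show (i : ℕ) + (n - (i + 1)) = n - 1 by omega)] using this
  rw [det_permute'] at hdet
  exact (isUnit_iff_isUnit_det N).mpr (IsUnit.of_mul_eq_one_right _ hdet)

section FlatOutput

variable {n : ℕ} {A : ℤ → Matrix (Fin n) (Fin n) ℝ} {b : ℤ → Fin n → ℝ}

theorem Pmat_mul (k : ℤ) (i j : ℕ) :
    Pmat n A (k + i) i * Pmat n A k j = Pmat n A (k + i) (i + j) := by
  induction j with
  | zero => simp [Pmat]
  | succ j ih =>
    rw [Pmat, ← mul_assoc, ih, ← add_assoc, Pmat]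
    congr 2
    push_cast
    ring

theorem Pmat_one (k : ℤ) : Pmat n A (k + 1) 1 = A k := by
  simp [Pmat]

theorem cvec_vecMul_Mmat {k : ℤ} (hMk : IsUnit (Mmat n A b k)) :
    cvec n A b k ᵥ* Mmat n A b k = elast n := by
  rw [cvec, vecMul_vecMul, nonsing_inv_mul _ ((isUnit_iff_isUnit_det _).mp hMk), vecMul_one]

theorem cvec_dotProduct_Pmat_mulVec {k : ℤ} (hMk : IsUnit (Mmat n A b k)) {j : ℕ} (hj : j < n) :
    cvec n A b k ⬝ᵥ (Pmat n A k j *ᵥ b (k - 1 - j)) = if j = n - 1 then 1 else 0 :=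
  congrFun (cvec_vecMul_Mmat hMk) ⟨j, hj⟩

def outputRow (n : ℕ) (A : ℤ → Matrix (Fin n) (Fin n) ℝ) (b : ℤ → Fin n → ℝ) (k : ℤ) (i : ℕ) :
    Fin n → ℝ :=
  cvec n A b (k + i) ᵥ* Pmat n A (k + i) i

theorem Theta_mulVec_apply (k : ℤ) (v : Fin n → ℝ) (i : Fin n) :
    (Theta n A b k *ᵥ v) i = outputRow n A b k i ⬝ᵥ v :=
  rfl

theorem outputRow_zero (k : ℤ) : outputRow n A b k 0 = cvec n A b k := by
  simp [outputRow, Pmat]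

theorem outputRow_succ_vecMul (k : ℤ) (i : ℕ) :
    outputRow n A b (k + 1) i ᵥ* A k = outputRow n A b k (i + 1) := by
  rw [outputRow, outputRow, vecMul_vecMul, ← Pmat_one (A := A) k, Pmat_mul,
    show k + 1 + (i : ℤ) = k + ((i + 1 : ℕ) : ℤ) by push_cast; ring]

theorem outputRow_dotProduct_b (hM : ∀ k, IsUnit (Mmat n A b k)) (k : ℤ) {i : ℕ} (hi : i < n) :
    outputRow n A b (k + 1) i ⬝ᵥ b k = if i = n - 1 then 1 else 0 := by
  rw [outputRow, ← dotProduct_mulVec, ← cvec_dotProduct_Pmat_mulVec (hM _) hi]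
  congr 3
  ring

theorem outputRow_dotProduct_step (hM : ∀ k, IsUnit (Mmat n A b k)) (k : ℤ) {i : ℕ} (hi : i < n)
    (v : Fin n → ℝ) (w : ℝ) :
    outputRow n A b (k + 1) i ⬝ᵥ (A k *ᵥ v + w • b k) =
      outputRow n A b k (i + 1) ⬝ᵥ v + if i = n - 1 then w else 0 := by
  rw [dotProduct_add, dotProduct_mulVec, outputRow_succ_vecMul, dotProduct_smul,
    outputRow_dotProduct_b hM k hi, smul_eq_mul, mul_ite, mul_one, mul_zero]

theorem Theta_mul_Mmat_apply (hM : ∀ k, IsUnit (Mmat n A b k)) (k : ℤ) (i j : Fin n)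
    (hij : (i : ℕ) + j < n) :
    (Theta n A b k * Mmat n A b k) i j = if (i : ℕ) + j = n - 1 then 1 else 0 := by
  change outputRow n A b k i ⬝ᵥ (Pmat n A k j *ᵥ b (k - 1 - (j : ℕ))) = _
  rw [outputRow, ← dotProduct_mulVec, mulVec_mulVec, Pmat_mul, ← cvec_dotProduct_Pmat_mulVec (hM _) hij]
  congr 3
  push_cast
  ring

theorem isUnit_Theta (hM : ∀ k, IsUnit (Mmat n A b k)) (k : ℤ) : IsUnit (Theta n A b k) := by
  have hprod := (isUnit_iff_isUnit_det _).mp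
    ((Theta n A b k * Mmat n A b k).isUnit_of_antitriangular (Theta_mul_Mmat_apply hM k))
  rw [det_mul] at hprod
  exact (isUnit_iff_isUnit_det _).mpr (isUnit_of_mul_isUnit_left hprod)

section Solution

variable {x : ℤ → Fin n → ℝ} {u : ℤ → ℝ}

theorem outputRow_dotProduct_of_solution (hM : ∀ k, IsUnit (Mmat n A b k))
    (hs : ∀ k, x (k + 1) = A k *ᵥ x k + u k • b k) {i : ℕ} (hi : i < n) (k : ℤ) :
    outputRow n A b k i ⬝ᵥ x k = cvec n A b (k + i) ⬝ᵥ x (k + i) := by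
  induction i generalizing k with
  | zero => simp [outputRow_zero]
  | succ i ih =>
    have hstep := outputRow_dotProduct_step hM k (by omega : i < n) (x k) (u k)
    rw [if_neg (by omega), add_zero, ← hs] at hstep
    rw [← hstep, ih (by omega) (k + 1), Nat.cast_succ, add_comm (i : ℤ), add_assoc]

theorem Theta_mulVec_of_solution (hM : ∀ k, IsUnit (Mmat n A b k))
    (hs : ∀ k, x (k + 1) = A k *ᵥ x k + u k • b k) (k : ℤ) :
    Theta n A b k *ᵥ x k = fun i : Fin n => cvec n A b (k + (i : ℕ)) ⬝ᵥ x (k + (i : ℕ)) :=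
  funext fun i => outputRow_dotProduct_of_solution hM hs i.isLt k

theorem input_eq_of_solution (hn : 1 ≤ n) (hM : ∀ k, IsUnit (Mmat n A b k))
    (hs : ∀ k, x (k + 1) = A k *ᵥ x k + u k • b k) (k : ℤ) :
    u k = cvec n A b (k + n) ⬝ᵥ x (k + n) - outputRow n A b k n ⬝ᵥ x k := by
  obtain ⟨m, rfl⟩ : ∃ m, n = m + 1 := ⟨n - 1, by omega⟩
  have hstep := outputRow_dotProduct_step hM k (by omega : m < m + 1) (x k) (u k)
  rw [if_pos (by omega), ← hs, outputRow_dotProduct_of_solution hM hs (by omega) (k + 1)] at hstep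
  rw [show k + ((m + 1 : ℕ) : ℤ) = k + 1 + m by push_cast; ring, hstep]
  ring

end Solution

def flatState (n : ℕ) (A : ℤ → Matrix (Fin n) (Fin n) ℝ) (b : ℤ → Fin n → ℝ) (y : ℤ → ℝ)
    (k : ℤ) : Fin n → ℝ :=
  (Theta n A b k)⁻¹ *ᵥ fun i => y (k + (i : ℕ))

def flatInput (n : ℕ) (A : ℤ → Matrix (Fin n) (Fin n) ℝ) (b : ℤ → Fin n → ℝ) (y : ℤ → ℝ)
    (k : ℤ) : ℝ :=
  y (k + n) - outputRow n A b k n ⬝ᵥ flatState n A b y k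

theorem Theta_mulVec_flatState (hM : ∀ k, IsUnit (Mmat n A b k)) (y : ℤ → ℝ) (k : ℤ) :
    Theta n A b k *ᵥ flatState n A b y k = fun i : Fin n => y (k + (i : ℕ)) := by
  rw [flatState, mulVec_mulVec,
    mul_nonsing_inv _ ((isUnit_iff_isUnit_det _).mp (isUnit_Theta hM k)), one_mulVec]

theorem outputRow_dotProduct_flatState (hM : ∀ k, IsUnit (Mmat n A b k)) (y : ℤ → ℝ) (k : ℤ)
    {i : ℕ} (hi : i < n) :
    outputRow n A b k i ⬝ᵥ flatState n A b y k = y (k + i) :=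
  congrFun (Theta_mulVec_flatState hM y k) ⟨i, hi⟩

theorem cvec_dotProduct_flatState (hn : 1 ≤ n) (hM : ∀ k, IsUnit (Mmat n A b k))
    (y : ℤ → ℝ) (k : ℤ) :
    cvec n A b k ⬝ᵥ flatState n A b y k = y k := by
  simpa [outputRow_zero] using outputRow_dotProduct_flatState hM y k (i := 0) (by omega)

theorem flatState_succ (hM : ∀ k, IsUnit (Mmat n A b k)) (y : ℤ → ℝ) (k : ℤ) :
    flatState n A b y (k + 1) = A k *ᵥ flatState n A b y k + flatInput n A b y k • b k := by
  have hΘ := (isUnit_iff_isUnit_det _).mp (isUnit_Theta hM (k + 1))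
  suffices Theta n A b (k + 1) *ᵥ (A k *ᵥ flatState n A b y k + flatInput n A b y k • b k) =
      fun i : Fin n => y (k + 1 + (i : ℕ)) by
    rw [flatState, ← this, mulVec_mulVec, nonsing_inv_mul _ hΘ, one_mulVec]
  funext i
  rw [Theta_mulVec_apply, outputRow_dotProduct_step hM k i.isLt]
  split_ifs with hi
  · rw [flatInput, show (i : ℕ) + 1 = n by omega, show k + 1 + (i : ℕ) = k + n by omega]
    ring
  · rw [add_zero, outputRow_dotProduct_flatState hM y k (by omega)]
    push_cast
    ring_nf

theorem flatState_of_solution {x : ℤ → Fin n → ℝ} {u : ℤ → ℝ} (hM : ∀ k, IsUnit (Mmat n A b k))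
    (hs : ∀ k, x (k + 1) = A k *ᵥ x k + u k • b k) (k : ℤ) :
    flatState n A b (fun k => cvec n A b k ⬝ᵥ x k) k = x k := by
  rw [flatState, ← Theta_mulVec_of_solution hM hs, mulVec_mulVec,
    nonsing_inv_mul _ ((isUnit_iff_isUnit_det _).mp (isUnit_Theta hM k)), one_mulVec]

theorem flatInput_of_solution {x : ℤ → Fin n → ℝ} {u : ℤ → ℝ} (hn : 1 ≤ n)
    (hM : ∀ k, IsUnit (Mmat n A b k)) (hs : ∀ k, x (k + 1) = A k *ᵥ x k + u k • b k) (k : ℤ) :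
    flatInput n A b (fun k => cvec n A b k ⬝ᵥ x k) k = u k := by
  rw [flatInput, flatState_of_solution hM hs, input_eq_of_solution hn hM hs]

end FlatOutput

/-- under the rank condition (`M_k` invertible for all `k`), the map sending
a solution `(x, u)` of `x_{k+1} = A_k x_k + b_k u_k` to its output sequence
`(c_k^T x_k)_{k ∈ ℤ}` is a bijection from the set of all solutions onto the set of all
real sequences `ℤ → ℝ`: `y_k = c_k^T x_k` is a flat output. -/
theorem stmt10 (n : ℕ) (hn : 1 ≤ n)
    (A : ℤ → Matrix (Fin n) (Fin n) ℝ) (b : ℤ → Fin n → ℝ)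
    (hM : ∀ k : ℤ, IsUnit (Mmat n A b k)) :
    Function.Bijective
      (fun s : {p : (ℤ → Fin n → ℝ) × (ℤ → ℝ) //
            ∀ k : ℤ, p.1 (k + 1) = A k *ᵥ p.1 k + p.2 k • b k} =>
        fun k : ℤ => cvec n A b k ⬝ᵥ s.val.1 k) := by
  refine Function.bijective_iff_has_inverse.mpr
    ⟨fun y => ⟨(flatState n A b y, flatInput n A b y), flatState_succ hM y⟩, ?_, ?_⟩
  · rintro ⟨⟨x, u⟩, hs⟩
    exact Subtype.ext (Prod.ext (funext (flatState_of_solution hM hs))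
      (funext (flatInput_of_solution hn hM hs)))
  · intro y
    exact funext (cvec_dotProduct_flatState hn hM y)
end
end
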